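/- arXiv:2007.03927 — 2 statements merged into one kernel-verified Lean document; each statement's English description precedes it below -/
import Mathlib

section
/- Let X ∈ ℝ^{d×n}, v ∈ ℝ^n, let q be a positive integer, and let (i₁,…,i_q) ∈ [d]^q. Define diagonal n×n matrices recursively by D^{(0)} = diag(v) and D^{(a)} = D^{(a−1)}·diag(X_{i_a,⋆}) for a = 1,…,q, where X_{i,⋆} denotes the i-th row of X. Assume ‖X^{⊗(q−a)} D^{(a−1)} X^⊤‖_F > 0 for every a = 1,…,q (with X^{⊗0} interpreted as the 1×n all-ones matrix). Then ∏_{a=1}^{q} ( ‖X^{⊗(q−a)} D^{(a−1)} (X_{i_a,⋆})^⊤‖₂² / ‖X^{⊗(q−a)} D^{(a−1)} X^⊤‖_F² ) = ( [X^{⊗q} v]_{(i₁,…,i_q)} )² / ‖X^{⊗q} v‖₂². -/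
/-!
Put `F a = ‖X^{⊗(q-a)} D^{(a)} 𝟙‖₂²`. Splitting off the first factor of a tensor index,
`‖X^{⊗(k+1)} u‖₂² = ‖X^{⊗k} diag(u) Xᵀ‖_F²`, so the `a`-th denominator is `F (a-1)`, while
`D^{(a-1)} X_{i_a,⋆}ᵀ = D^{(a)} 𝟙` makes the `a`-th numerator `F a`. The product telescopes to
`F q / F 0`, where `F 0 = ‖X^{⊗q} v‖₂²` and `F q = (∑ₗ D^{(q)}_{ll})² = [X^{⊗q} v]_{(i₁,…,i_q)}²`.
-/

open Matrix

/-- The `q`-fold vertical tensor power of `X ∈ ℝ^{d×n}`: rows indexed by tuples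
`t : Fin q → Fin d`, with `(X^{⊗q})_{t,l} = ∏ a, X_{t a, l}`. For `q = 0` the
index type is a singleton and the matrix is the `1×n` all-ones matrix. -/
def tensorPow {d n : ℕ} (X : Matrix (Fin d) (Fin n) ℝ) (q : ℕ) :
    Matrix (Fin q → Fin d) (Fin n) ℝ :=
  Matrix.of fun t l => ∏ a, X (t a) l

open Finset

lemma prod_range_succ_div_mul_of_ne_zero {K : Type*} [CommGroupWithZero K] (f : ℕ → K) {n : ℕ}
    (hf : ∀ i < n, f i ≠ 0) : (∏ i ∈ range n, f (i + 1) / f i) * f 0 = f n := by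
  induction n with
  | zero => simp
  | succ n ih =>
    rw [prod_range_succ, mul_right_comm, ih fun i hi => hf i (by omega),
      mul_div_cancel₀ _ (hf n n.lt_succ_self)]

lemma prod_ite_val_lt_succ {M : Type*} [CommMonoid M] {q : ℕ} (f : Fin q → M) (a : Fin q) :
    (∏ b : Fin q, if (b : ℕ) < a + 1 then f b else 1) =
      (∏ b : Fin q, if (b : ℕ) < a then f b else 1) * f a := by
  have h_le : univ.filter (fun b : Fin q => (b : ℕ) < a + 1) = Iic a := by
    ext b; simp only [mem_filter, mem_univ, true_and, mem_Iic, Fin.le_def]; omega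
  have h_lt : univ.filter (fun b : Fin q => (b : ℕ) < a) = Iio a := by
    ext b; simp only [mem_filter, mem_univ, true_and, mem_Iio, Fin.lt_def]
  rw [← prod_filter, ← prod_filter, h_le, h_lt, Iic_eq_cons_Iio, prod_cons, mul_comm]

section TensorPow

variable {d n : ℕ} (X : Matrix (Fin d) (Fin n) ℝ)

lemma tensorPow_mulVec_apply (k : ℕ) (u : Fin n → ℝ) (t : Fin k → Fin d) :
    (tensorPow X k *ᵥ u) t = ∑ l, u l * ∏ a, X (t a) l := by
  simp only [mulVec, dotProduct, tensorPow, of_apply, mul_comm]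

lemma sum_sq_tensorPow_zero_mulVec (u : Fin n → ℝ) :
    ∑ t, ((tensorPow X 0 *ᵥ u) t) ^ 2 = (∑ l, u l) ^ 2 := by
  simp [tensorPow_mulVec_apply]

lemma tensorPow_succ_mulVec_cons (k : ℕ) (u : Fin n → ℝ) (j : Fin d) (t : Fin k → Fin d) :
    (tensorPow X (k + 1) *ᵥ u) (Fin.cons j t) = (tensorPow X k * diagonal u * Xᵀ) t j := by
  rw [tensorPow_mulVec_apply, mul_apply]
  simp only [mul_diagonal, transpose_apply, tensorPow, of_apply, Fin.prod_univ_succ,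
    Fin.cons_zero, Fin.cons_succ]
  exact sum_congr rfl fun l _ => by ring

lemma sum_sq_tensorPow_succ_mulVec (k : ℕ) (u : Fin n → ℝ) :
    ∑ s, ((tensorPow X (k + 1) *ᵥ u) s) ^ 2 =
      ∑ t, ∑ j, ((tensorPow X k * diagonal u * Xᵀ) t j) ^ 2 := by
  rw [sum_comm, ← Fintype.sum_prod_type', ← (Fin.consEquiv fun _ => Fin d).sum_comp]
  exact Fintype.sum_congr _ _ fun p => by rw [← tensorPow_succ_mulVec_cons]; rfl

end TensorPow

/-- telescoping product of conditional `ℓ₂`-sampling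
probabilities. With `D^{(a)} = diag(v) · diag(X_{i₁,⋆}) ⋯ diag(X_{i_a,⋆})`
(whose diagonal is `w a`), the product over `a = 1, …, q` (here `a : Fin q`,
zero-based) of
`‖X^{⊗(q−a)} D^{(a−1)} (X_{i_a,⋆})ᵀ‖₂² / ‖X^{⊗(q−a)} D^{(a−1)} Xᵀ‖_F²`
equals `([X^{⊗q} v]_{(i₁,…,i_q)})² / ‖X^{⊗q} v‖₂²`. -/
theorem telescoping_l2_sampling_product
    (d n q : ℕ) (hq : 0 < q) (X : Matrix (Fin d) (Fin n) ℝ) (v : Fin n → ℝ)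
    (i : Fin q → Fin d)
    (w : ℕ → Fin n → ℝ)
    (hw : ∀ (a : ℕ) (l : Fin n),
      w a l = v l * ∏ b : Fin q, if (b : ℕ) < a then X (i b) l else 1)
    (hden : ∀ a : Fin q,
      0 < ∑ t : Fin (q - ((a : ℕ) + 1)) → Fin d, ∑ j : Fin d,
        ((tensorPow X (q - ((a : ℕ) + 1)) * Matrix.diagonal (w a) * Xᵀ) t j) ^ 2) :
    (∏ a : Fin q,
        (∑ t : Fin (q - ((a : ℕ) + 1)) → Fin d,
            ((tensorPow X (q - ((a : ℕ) + 1))).mulVec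
              (fun l => w a l * X (i a) l) t) ^ 2) /
          (∑ t : Fin (q - ((a : ℕ) + 1)) → Fin d, ∑ j : Fin d,
            ((tensorPow X (q - ((a : ℕ) + 1)) * Matrix.diagonal (w a) * Xᵀ) t j) ^ 2)) =
      ((tensorPow X q).mulVec v i) ^ 2 /
        ∑ t : Fin q → Fin d, ((tensorPow X q).mulVec v t) ^ 2 := by
  let F (a : ℕ) : ℝ := ∑ t : Fin (q - a) → Fin d, ((tensorPow X (q - a) *ᵥ w a) t) ^ 2
  have hw_succ (a : Fin q) : (fun l => w a l * X (i a) l) = w (a + 1) :=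
    funext fun l => by rw [hw, hw, prod_ite_val_lt_succ, mul_assoc]
  have hden_eq (a : Fin q) : ∑ t, ∑ j,
      ((tensorPow X (q - (a + 1)) * diagonal (w a) * Xᵀ) t j) ^ 2 = F a := by
    rw [← sum_sq_tensorPow_succ_mulVec, show q - (a + 1) + 1 = q - a by omega]
  have hF_ne (a : ℕ) (ha : a < q) : F a ≠ 0 := (hden_eq ⟨a, ha⟩ ▸ hden ⟨a, ha⟩).ne'
  have hFq : F q = ((tensorPow X q *ᵥ v) i) ^ 2 := by
    show ∑ t : Fin (q - q) → Fin d, _ = _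
    rw [Nat.sub_self, sum_sq_tensorPow_zero_mulVec, tensorPow_mulVec_apply]
    simp only [hw, Fin.is_lt, if_true]
  have hF0 : F 0 = ∑ t, ((tensorPow X q *ᵥ v) t) ^ 2 := by
    have hw0 : w 0 = v := funext fun l => by simp [hw]
    rw [← hw0]; rfl
  simp only [hw_succ, hden_eq]
  rw [Fin.prod_univ_eq_prod_range (fun a => F (a + 1) / F a), ← hFq, ← hF0,
    eq_div_iff (hF_ne 0 hq), prod_range_succ_div_mul_of_ne_zero F hF_ne]
end

section
/- Let K, A, M ∈ ℝ^{n×n} be symmetric matrices with K and A positive semidefinite, let λ > 0 and ε ∈ (0,1). Suppose ‖A − K‖_op ≤ (ε/3)·λ and (A + λI)/(1 + ε/3) ⪯ M + λI ⪯ (A + λI)/(1 − ε/3). Then (K + λI)/(1 + ε) ⪯ M + λI ⪯ (K + λI)/(1 − ε); i.e., an (ε/3, λ)-spectral approximation of a matrix A that is entrywise-in-operator-norm (ε/3)·λ-close to K is an (ε, λ)-spectral approximation of K. -/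
/-!
Write `Kλ = K + λI`, `Aλ = A + λI`, `Mλ = M + λI` and `δ = ε/3`. A Hermitian matrix of operator
norm at most `δλ` lies between `-δλ I` and `δλ I`, and `λI ⪯ Kλ`, `λI ⪯ Aλ`; hence `Aλ ⪯ (1 + δ) Kλ`
and `Kλ ⪯ (1 + δ) Aλ`. Composing with `Aλ / (1 + δ) ⪯ Mλ ⪯ Aλ / (1 - δ)` gives
`Kλ / (1 + δ)² ⪯ Mλ ⪯ (1 + δ) Kλ / (1 - δ)`, and `(1 + δ)² ≤ 1 + 3δ`, `(1 + δ)(1 - 3δ) ≤ 1 - δ`.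
-/

open Matrix

section OrderedModule

variable {E : Type*} [AddCommGroup E] [PartialOrder E] [IsOrderedAddMonoid E] [Module ℝ E]
  [PosSMulMono ℝ E]

theorem add_smul_le_one_add_smul_add_smul {a k u : E} {c t : ℝ} (hk : 0 ≤ k) (hc : 0 ≤ c)
    (h : a - k ≤ (c * t) • u) : a + t • u ≤ (1 + c) • (k + t • u) :=
  calc a + t • u ≤ k + (c * t) • u + t • u := by gcongr; exact sub_le_iff_le_add'.mp h
    _ ≤ k + (c * t) • u + t • u + c • k := le_add_of_nonneg_right (smul_nonneg hc hk)
    _ = (1 + c) • (k + t • u) := by module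

theorem inv_one_add_smul_le_of_le_one_add_smul {p q m : E} {δ ε : ℝ} (hp : 0 ≤ p) (hδ₀ : 0 ≤ δ)
    (hδ₁ : δ ≤ 1) (hδε : 3 * δ ≤ ε) (hpq : p ≤ (1 + δ) • q) (hqm : (1 + δ)⁻¹ • q ≤ m) :
    (1 + ε)⁻¹ • p ≤ m := by
  have hscalar : (1 + ε)⁻¹ ≤ (1 + δ)⁻¹ * (1 + δ)⁻¹ := by
    rw [← mul_inv]
    exact inv_anti₀ (by positivity) (by nlinarith)
  calc (1 + ε)⁻¹ • p ≤ ((1 + δ)⁻¹ * (1 + δ)⁻¹) • p := smul_le_smul_of_nonneg_right hscalar hp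
    _ = (1 + δ)⁻¹ • (1 + δ)⁻¹ • p := mul_smul ..
    _ ≤ (1 + δ)⁻¹ • q := by
      gcongr
      exact (inv_smul_le_iff_of_pos (by positivity)).mpr hpq
    _ ≤ m := hqm

theorem le_inv_one_sub_smul_of_le_one_add_smul {p q m : E} {δ ε : ℝ} (hp : 0 ≤ p) (hδ₀ : 0 ≤ δ)
    (hδε : 3 * δ ≤ ε) (hε : ε < 1) (hqp : q ≤ (1 + δ) • p) (hmq : m ≤ (1 - δ)⁻¹ • q) :
    m ≤ (1 - ε)⁻¹ • p := by
  have hscalar : (1 - δ)⁻¹ * (1 + δ) ≤ (1 - ε)⁻¹ := by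
    rw [inv_mul_eq_div, div_le_iff₀ (by linarith), inv_mul_eq_div, le_div_iff₀ (by linarith)]
    nlinarith
  calc m ≤ (1 - δ)⁻¹ • q := hmq
    _ ≤ (1 - δ)⁻¹ • (1 + δ) • p := smul_le_smul_of_nonneg_left hqp (inv_nonneg.mpr (by linarith))
    _ = ((1 - δ)⁻¹ * (1 + δ)) • p := (mul_smul ..).symm
    _ ≤ (1 - ε)⁻¹ • p := smul_le_smul_of_nonneg_right hscalar hp

end OrderedModule

open scoped MatrixOrder

theorem Matrix.IsHermitian.le_smul_one_of_norm_toEuclideanCLM_le {𝕜 ι : Type*} [RCLike 𝕜]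
    [Fintype ι] [DecidableEq ι] {B : Matrix ι ι 𝕜} (hB : B.IsHermitian) {r : ℝ}
    (h : ‖toEuclideanCLM (𝕜 := 𝕜) B‖ ≤ r) : B ≤ r • 1 := by
  rw [le_iff, ← isPositive_toEuclideanLin_iff]
  refine ⟨isSymmetric_toEuclideanLin_iff.mpr ((isHermitian_one.smul (.all r)).sub hB), fun x => ?_⟩
  have hBx : RCLike.re (inner 𝕜 (toEuclideanCLM (𝕜 := 𝕜) B x) x) ≤ r * ‖x‖ ^ 2 :=
    calc _ ≤ ‖toEuclideanCLM (𝕜 := 𝕜) B x‖ * ‖x‖ := re_inner_le_norm _ _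
      _ ≤ ‖toEuclideanCLM (𝕜 := 𝕜) B‖ * ‖x‖ * ‖x‖ := by
        gcongr; exact ContinuousLinearMap.le_opNorm _ _
      _ ≤ r * ‖x‖ ^ 2 := by rw [mul_assoc, ← sq]; gcongr
  rw [← coe_toEuclideanCLM_eq_toEuclideanLin, RCLike.real_smul_eq_coe_smul (K := 𝕜) r 1, map_sub,
    map_smul, map_one, ContinuousLinearMap.toLinearMap_sub, LinearMap.sub_apply, inner_sub_left,
    map_sub, sub_nonneg, ContinuousLinearMap.coe_coe, ContinuousLinearMap.coe_coe,
    _root_.smul_apply, one_apply_eq_self, inner_smul_left, inner_self_eq_norm_sq_to_K,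
    RCLike.conj_ofReal, ← RCLike.ofReal_pow, ← RCLike.ofReal_mul, RCLike.ofReal_re]
  exact hBx

theorem spectral_approx_transfer_general
    (n : ℕ) (K A M : Matrix (Fin n) (Fin n) ℝ) (lam ε : ℝ)
    (hK : K.PosSemidef) (hA : A.PosSemidef)
    (hlam : 0 < lam) (hε₀ : 0 < ε) (hε₁ : ε < 1)
    (hclose : ‖Matrix.toEuclideanCLM (𝕜 := ℝ) (A - K)‖ ≤ ε / 3 * lam)
    (h₁ : ((M + lam • (1 : Matrix (Fin n) (Fin n) ℝ)) -
        (1 / (1 + ε / 3)) •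
          (A + lam • (1 : Matrix (Fin n) (Fin n) ℝ))).PosSemidef)
    (h₂ : ((1 / (1 - ε / 3)) • (A + lam • (1 : Matrix (Fin n) (Fin n) ℝ)) -
        (M + lam • (1 : Matrix (Fin n) (Fin n) ℝ))).PosSemidef) :
    ((M + lam • (1 : Matrix (Fin n) (Fin n) ℝ)) -
        (1 / (1 + ε)) • (K + lam • (1 : Matrix (Fin n) (Fin n) ℝ))).PosSemidef ∧
    ((1 / (1 - ε)) • (K + lam • (1 : Matrix (Fin n) (Fin n) ℝ)) -
        (M + lam • (1 : Matrix (Fin n) (Fin n) ℝ))).PosSemidef := by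
  have hδ : 0 ≤ ε / 3 := by positivity
  have hAK : A - K ≤ (ε / 3 * lam) • 1 :=
    (hA.1.sub hK.1).le_smul_one_of_norm_toEuclideanCLM_le hclose
  have hKA : K - A ≤ (ε / 3 * lam) • 1 :=
    (hK.1.sub hA.1).le_smul_one_of_norm_toEuclideanCLM_le <| by rwa [← neg_sub, map_neg, norm_neg]
  have hKlam : 0 ≤ K + lam • 1 := add_nonneg hK.nonneg (smul_nonneg hlam.le PosSemidef.one.nonneg)
  simp only [one_div] at h₁ h₂ ⊢
  exact ⟨le_iff.mp <| inv_one_add_smul_le_of_le_one_add_smul hKlam hδ (by linarith) (by linarith)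
      (add_smul_le_one_add_smul_add_smul hA.nonneg hδ hKA) (le_iff.mpr h₁),
    le_iff.mp <| le_inv_one_sub_smul_of_le_one_add_smul hKlam hδ (by linarith) hε₁
      (add_smul_le_one_add_smul_add_smul hK.nonneg hδ hAK) (le_iff.mpr h₂)⟩

/-- transfer step. If `‖A − K‖_op ≤ (ε/3)λ` and `M` is an
`(ε/3, λ)`-spectral approximation to `A`, then `M` is an `(ε, λ)`-spectral
approximation to `K`. -/
theorem spectral_approx_transfer
    (n : ℕ) (K A M : Matrix (Fin n) (Fin n) ℝ) (lam ε : ℝ)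
    (hK : K.PosSemidef) (hA : A.PosSemidef) (hM : M.IsHermitian)
    (hlam : 0 < lam) (hε₀ : 0 < ε) (hε₁ : ε < 1)
    (hclose : ‖Matrix.toEuclideanCLM (𝕜 := ℝ) (A - K)‖ ≤ ε / 3 * lam)
    (h₁ : ((M + lam • (1 : Matrix (Fin n) (Fin n) ℝ)) -
        (1 / (1 + ε / 3)) •
          (A + lam • (1 : Matrix (Fin n) (Fin n) ℝ))).PosSemidef)
    (h₂ : ((1 / (1 - ε / 3)) • (A + lam • (1 : Matrix (Fin n) (Fin n) ℝ)) -
        (M + lam • (1 : Matrix (Fin n) (Fin n) ℝ))).PosSemidef) :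
    ((M + lam • (1 : Matrix (Fin n) (Fin n) ℝ)) -
        (1 / (1 + ε)) • (K + lam • (1 : Matrix (Fin n) (Fin n) ℝ))).PosSemidef ∧
    ((1 / (1 - ε)) • (K + lam • (1 : Matrix (Fin n) (Fin n) ℝ)) -
        (M + lam • (1 : Matrix (Fin n) (Fin n) ℝ))).PosSemidef :=
  spectral_approx_transfer_general n K A M lam ε hK hA hlam hε₀ hε₁ hclose h₁ h₂
end
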